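/- arXiv:1802.04627 — 2 statements merged into one kernel-verified Lean document; each statement's English description precedes it below -/
import Mathlib

section
/- Let Z ~ N(0, σ²I_n) in ℝⁿ and let r > 0. Among all measurable sets A ⊆ ℝⁿ with Pr{Z ∉ A} ≤ ε, a Euclidean ball centered at the origin achieving Pr{Z ∉ A} = ε has minimal Lebesgue volume. -/
/-! Neyman–Pearson ("bathtub") argument: the Gaussian density is at least its value `c` on the
sphere of radius `r` inside the ball `B` and at most `c` outside it. Hence
`c · vol (B \ A) ≤ P (B \ A) ≤ P (A \ B) ≤ c · vol (A \ B)`, where the middle inequality is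
`P B ≤ P A` with the common part `A ∩ B` removed; cancelling `c` and adding back `A ∩ B`
gives `vol B ≤ vol A`. -/

open MeasureTheory Set
open scoped ENNReal

noncomputable def gaussDensity (n : ℕ) (σ : ℝ) (z : EuclideanSpace ℝ (Fin n)) : ℝ :=
  (2 * Real.pi * σ ^ 2) ^ (-(n : ℝ) / 2) * Real.exp (-‖z‖ ^ 2 / (2 * σ ^ 2))

noncomputable def gaussMeasure (n : ℕ) (σ : ℝ) : Measure (EuclideanSpace ℝ (Fin n)) :=
  volume.withDensity (fun z => ENNReal.ofReal (gaussDensity n σ z))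

section Bathtub

variable {α : Type*} [MeasurableSpace α] {μ ν : Measure α} {f : α → ℝ≥0∞} {c : ℝ≥0∞}
  {s t : Set α}

theorem measure_le_of_sdiff_le_sdiff (hs : MeasurableSet s) (ht : MeasurableSet t)
    (h : μ (s \ t) ≤ μ (t \ s)) : μ s ≤ μ t := by
  rw [← measure_inter_add_sdiff s ht, ← measure_inter_add_sdiff t hs, inter_comm]
  gcongr

theorem measure_sdiff_le_sdiff_of_le (hs : MeasurableSet s) (ht : MeasurableSet t)
    (hfin : μ (s ∩ t) ≠ ∞) (h : μ s ≤ μ t) : μ (s \ t) ≤ μ (t \ s) := by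
  rwa [← ENNReal.add_le_add_iff_left hfin, measure_inter_add_sdiff s ht, inter_comm,
    measure_inter_add_sdiff t hs]

theorem const_mul_le_withDensity_apply (hs : MeasurableSet s) (hf : ∀ x ∈ s, c ≤ f x) :
    c * ν s ≤ ν.withDensity f s := by
  rw [withDensity_apply f hs, ← setLIntegral_const]
  exact setLIntegral_mono' hs hf

theorem withDensity_apply_le_const_mul (hs : MeasurableSet s) (hf : ∀ x ∈ s, f x ≤ c) :
    ν.withDensity f s ≤ c * ν s := by
  rw [withDensity_apply f hs, ← setLIntegral_const]
  exact setLIntegral_mono' hs hf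

theorem measure_le_of_withDensity_le_of_superlevel (hs : MeasurableSet s) (ht : MeasurableSet t)
    (hc₀ : c ≠ 0) (hc : c ≠ ∞) (hf_in : ∀ x ∈ s, c ≤ f x) (hf_out : ∀ x ∉ s, f x ≤ c)
    (hfin : ν.withDensity f s ≠ ∞) (hst : ν.withDensity f s ≤ ν.withDensity f t) :
    ν s ≤ ν t := by
  have hfin' : ν.withDensity f (s ∩ t) ≠ ∞ := measure_ne_top_of_subset inter_subset_left hfin
  refine measure_le_of_sdiff_le_sdiff hs ht <| (ENNReal.mul_le_mul_iff_right hc₀ hc).1 ?_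
  calc c * ν (s \ t) ≤ ν.withDensity f (s \ t) :=
        const_mul_le_withDensity_apply (hs.diff ht) fun x hx ↦ hf_in x hx.1
    _ ≤ ν.withDensity f (t \ s) := measure_sdiff_le_sdiff_of_le hs ht hfin' hst
    _ ≤ c * ν (t \ s) := withDensity_apply_le_const_mul (ht.diff hs) fun x hx ↦ hf_out x hx.2

end Bathtub

noncomputable def gaussRadialDensity (n : ℕ) (σ ρ : ℝ) : ℝ :=
  (2 * Real.pi * σ ^ 2) ^ (-(n : ℝ) / 2) * Real.exp (-ρ ^ 2 / (2 * σ ^ 2))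

theorem gaussDensity_eq_gaussRadialDensity (n : ℕ) (σ : ℝ) (z : EuclideanSpace ℝ (Fin n)) :
    gaussDensity n σ z = gaussRadialDensity n σ ‖z‖ := rfl

theorem gaussRadialDensity_pos (n : ℕ) {σ : ℝ} (hσ : σ ≠ 0) (ρ : ℝ) :
    0 < gaussRadialDensity n σ ρ := by
  unfold gaussRadialDensity
  positivity

theorem gaussRadialDensity_antitoneOn (n : ℕ) (σ : ℝ) :
    AntitoneOn (gaussRadialDensity n σ) (Ici 0) := by
  intro ρ₁ hρ₁ ρ₂ _ hρ
  unfold gaussRadialDensity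
  gcongr

theorem centered_ball_min_volume_general (n : ℕ) (σ : ℝ) (hσ : 0 < σ) (ε : ℝ)
    (r : ℝ) (hr : 0 < r)
    (hB : gaussMeasure n σ (Metric.closedBall (0 : EuclideanSpace ℝ (Fin n)) r) =
      ENNReal.ofReal (1 - ε))
    (A : Set (EuclideanSpace ℝ (Fin n))) (hA : MeasurableSet A)
    (hAprob : ENNReal.ofReal (1 - ε) ≤ gaussMeasure n σ A) :
    volume (Metric.closedBall (0 : EuclideanSpace ℝ (Fin n)) r) ≤ volume A := by
  refine measure_le_of_withDensity_le_of_superlevel measurableSet_closedBall hA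
    (c := ENNReal.ofReal (gaussRadialDensity n σ r)) (by simpa using gaussRadialDensity_pos n hσ.ne' r) ENNReal.ofReal_ne_top
    (fun z hz ↦ ENNReal.ofReal_le_ofReal ?_) (fun z hz ↦ ENNReal.ofReal_le_ofReal ?_)
    (hB ▸ ENNReal.ofReal_ne_top) (hB ▸ hAprob)
  · rw [gaussDensity_eq_gaussRadialDensity]
    exact gaussRadialDensity_antitoneOn n σ (norm_nonneg z) hr.le
      (mem_closedBall_zero_iff.1 hz)
  · rw [gaussDensity_eq_gaussRadialDensity]
    exact gaussRadialDensity_antitoneOn n σ hr.le (norm_nonneg z)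
      (not_le.1 (mt mem_closedBall_zero_iff.2 hz)).le

theorem centered_ball_min_volume (n : ℕ) (σ : ℝ) (hσ : 0 < σ) (ε : ℝ) (hε : 0 ≤ ε)
    (r : ℝ) (hr : 0 < r)
    (hB : gaussMeasure n σ (Metric.closedBall (0 : EuclideanSpace ℝ (Fin n)) r) =
      ENNReal.ofReal (1 - ε))
    (A : Set (EuclideanSpace ℝ (Fin n))) (hA : MeasurableSet A)
    (hAprob : ENNReal.ofReal (1 - ε) ≤ gaussMeasure n σ A) :
    volume (Metric.closedBall (0 : EuclideanSpace ℝ (Fin n)) r) ≤ volume A :=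
  centered_ball_min_volume_general n σ hσ ε r hr hB A hA hAprob
end

section
/- For λ in the range 0 ≤ λ ≤ (1/2)ln(e/2), the value w(λ) solving w - ln(1+w) = 2λ lies in [0,1], and E_r(1 + w(λ)) = λ, where E_r(x) = (1/2)(x - ln x - 1) for 1 ≤ x ≤ 2. -/
/-! The tangent line of `log` at `2` gives `w - log (1 + w) ≥ (1 + w) / 2 - log 2`, and the right
side equals `log (e / 2)` exactly at `w = 1`; so `w - log (1 + w) = 2λ ≤ log (e / 2)` forces
`w ≤ 1`. The identity `E_r (1 + w) = λ` is then the defining equation of `w`, halved. -/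

namespace Real

theorem log_le_log_add_div_sub_one {a x : ℝ} (ha : 0 < a) (hx : 0 < x) :
    log x ≤ log a + x / a - 1 := by
  have h := log_le_sub_one_of_pos (div_pos hx ha)
  rw [log_div hx.ne' ha.ne'] at h
  linarith

theorem log_exp_one_div_two : log (exp 1 / 2) = 1 - log 2 := by
  rw [log_div (exp_ne_zero 1) two_ne_zero, log_exp]

theorem le_one_of_sub_log_one_add_le {w : ℝ} (hw : -1 < w)
    (h : w - log (1 + w) ≤ log (exp 1 / 2)) : w ≤ 1 := by
  have htangent := log_le_log_add_div_sub_one two_pos (by linarith : (0 : ℝ) < 1 + w)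
  rw [log_exp_one_div_two] at h
  linarith

end Real

theorem Er_matches_lambda (lam : ℝ)
    (hlam : 0 ≤ lam ∧ lam ≤ (1 / 2) * Real.log (Real.exp 1 / 2))
    (w : ℝ) (hw : 0 ≤ w ∧ w - Real.log (1 + w) = 2 * lam) :
    w ∈ Set.Icc (0 : ℝ) 1 ∧
      (1 / 2) * ((1 + w) - Real.log (1 + w) - 1) = lam := by
  obtain ⟨hw0, hdef⟩ := hw
  have hw1 : w ≤ 1 := Real.le_one_of_sub_log_one_add_le (by linarith) (by linarith [hlam.2])
  exact ⟨⟨hw0, hw1⟩, by linarith⟩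
end
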